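/- Let Z ≥ 0 be a bounded random variable with z := ‖Z‖_∞ > 0. Then for every integer k ≥ 0, lim_{n→∞} E[Z^{n+k}] / E[Z^n] = z^k. -/

import Mathlib

/-!
Almost surely `Z ^ (n + k) ≤ z ^ k * Z ^ n`, so the ratio is at most `z ^ k`.
Conversely, for `c, x ≥ 0` one has `c ^ k * (x ^ n - c ^ n) ≤ x ^ (n + k)` (split on `x ≥ c`),
so the ratio is at least `c ^ k * (1 - c ^ n / E[Z ^ n])`. For `c < c' < z` the event `{c' ≤ Z}`
has positive probability `p`, whence `E[Z ^ n] ≥ p * c' ^ n` and `c ^ n / E[Z ^ n] → 0`.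
Letting `c ↑ z` squeezes the ratio to `z ^ k`.
-/

open MeasureTheory Filter Topology

lemma mul_pow_sub_pow_le_pow_add {x c : ℝ} (hx : 0 ≤ x) (hc : 0 ≤ c) (n k : ℕ) :
    c ^ k * (x ^ n - c ^ n) ≤ x ^ (n + k) := by
  rcases le_total c x with hcx | hxc
  · calc c ^ k * (x ^ n - c ^ n) ≤ x ^ k * x ^ n :=
          mul_le_mul (pow_le_pow_left₀ hc hcx k) (sub_le_self _ (pow_nonneg hc n))
            (sub_nonneg.2 (pow_le_pow_left₀ hc hcx n)) (pow_nonneg hx k)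
      _ = x ^ (n + k) := by ring
  · have : x ^ n - c ^ n ≤ 0 := sub_nonpos.2 (pow_le_pow_left₀ hx hxc n)
    nlinarith [pow_nonneg hc k, pow_nonneg hx (n + k)]

namespace MeasureTheory

variable {Ω : Type*} [MeasurableSpace Ω] {μ : Measure Ω} {Z : Ω → ℝ}

lemma integrable_pow_of_ae_nonneg_of_ae_le [IsFiniteMeasure μ] (hZ : AEStronglyMeasurable Z μ)
    (hZ0 : ∀ᵐ ω ∂μ, 0 ≤ Z ω) {M : ℝ} (hZM : ∀ᵐ ω ∂μ, Z ω ≤ M) (n : ℕ) :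
    Integrable (fun ω => Z ω ^ n) μ := by
  refine .of_bound (hZ.pow n) (M ^ n) ?_
  filter_upwards [hZ0, hZM] with ω h0 hM
  rw [Real.norm_of_nonneg (pow_nonneg h0 n)]
  exact pow_le_pow_left₀ h0 hM n

lemma pow_mul_measureReal_le_integral_pow [IsFiniteMeasure μ] (hZ0 : ∀ᵐ ω ∂μ, 0 ≤ Z ω)
    {n : ℕ} (hint : Integrable (fun ω => Z ω ^ n) μ) {c : ℝ} (hc : 0 ≤ c) :
    c ^ n * μ.real {ω | c ≤ Z ω} ≤ ∫ ω, Z ω ^ n ∂μ := by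
  have hsub : {ω | c ≤ Z ω} ⊆ {ω | c ^ n ≤ Z ω ^ n} :=
    fun ω (hω : c ≤ Z ω) => pow_le_pow_left₀ hc hω n
  calc c ^ n * μ.real {ω | c ≤ Z ω} ≤ c ^ n * μ.real {ω | c ^ n ≤ Z ω ^ n} :=
        mul_le_mul_of_nonneg_left (measureReal_mono hsub (measure_ne_top _ _)) (pow_nonneg hc n)
    _ ≤ ∫ ω, Z ω ^ n ∂μ :=
        mul_meas_ge_le_integral_of_nonneg
          (by filter_upwards [hZ0] with ω h0 using pow_nonneg h0 n) hint _

lemma integral_pow_add_le_pow_mul (hZ0 : ∀ᵐ ω ∂μ, 0 ≤ Z ω) {b : ℝ} (hZb : ∀ᵐ ω ∂μ, Z ω ≤ b)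
    {n k : ℕ} (hn : Integrable (fun ω => Z ω ^ n) μ)
    (hnk : Integrable (fun ω => Z ω ^ (n + k)) μ) :
    ∫ ω, Z ω ^ (n + k) ∂μ ≤ b ^ k * ∫ ω, Z ω ^ n ∂μ := by
  rw [← integral_const_mul]
  refine integral_mono_ae hnk (hn.const_mul _) ?_
  filter_upwards [hZ0, hZb] with ω h0 hb
  calc Z ω ^ (n + k) = Z ω ^ k * Z ω ^ n := by ring
    _ ≤ b ^ k * Z ω ^ n := by gcongr

lemma pow_mul_integral_pow_sub_le_integral_pow_add [IsProbabilityMeasure μ]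
    (hZ0 : ∀ᵐ ω ∂μ, 0 ≤ Z ω) {n k : ℕ} (hn : Integrable (fun ω => Z ω ^ n) μ)
    (hnk : Integrable (fun ω => Z ω ^ (n + k)) μ) {c : ℝ} (hc : 0 ≤ c) :
    c ^ k * (∫ ω, Z ω ^ n ∂μ - c ^ n) ≤ ∫ ω, Z ω ^ (n + k) ∂μ := by
  have hlhs : c ^ k * (∫ ω, Z ω ^ n ∂μ - c ^ n) = ∫ ω, c ^ k * (Z ω ^ n - c ^ n) ∂μ := by
    rw [integral_const_mul, integral_sub hn (integrable_const _), integral_const, smul_eq_mul,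
      probReal_univ, one_mul]
  rw [hlhs]
  refine integral_mono_ae ((hn.sub (integrable_const _)).const_mul _) hnk ?_
  filter_upwards [hZ0] with ω h0 using mul_pow_sub_pow_le_pow_add h0 hc n k

lemma measureReal_setOf_le_pos_of_lt_essSup [IsFiniteMeasure μ] [NeZero μ]
    (hZ0 : ∀ᵐ ω ∂μ, 0 ≤ Z ω) {c : ℝ} (hc : c < essSup Z μ) : 0 < μ.real {ω | c ≤ Z ω} := by
  have hfreq : ∃ᵐ ω ∂μ, c < Z ω :=
    frequently_lt_of_lt_limsup (isCoboundedUnder_le_of_eventually_le _ hZ0) hc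
  refine ENNReal.toReal_pos (fun h => frequently_ae_iff.1 hfreq (measure_mono_null ?_ h))
    (measure_ne_top _ _)
  exact fun ω (hω : c < Z ω) => hω.le

lemma integral_pow_pos [IsFiniteMeasure μ] [NeZero μ] (hZ0 : ∀ᵐ ω ∂μ, 0 ≤ Z ω) {n : ℕ}
    (hint : Integrable (fun ω => Z ω ^ n) μ) (hZ : 0 < essSup Z μ) :
    0 < ∫ ω, Z ω ^ n ∂μ := by
  have hp := measureReal_setOf_le_pos_of_lt_essSup hZ0 (half_lt_self hZ)
  calc 0 < (essSup Z μ / 2) ^ n * μ.real {ω | essSup Z μ / 2 ≤ Z ω} := by positivity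
    _ ≤ ∫ ω, Z ω ^ n ∂μ := pow_mul_measureReal_le_integral_pow hZ0 hint (by positivity)

lemma tendsto_pow_div_integral_pow_zero [IsFiniteMeasure μ] [NeZero μ]
    (hZ0 : ∀ᵐ ω ∂μ, 0 ≤ Z ω) (hint : ∀ n : ℕ, Integrable (fun ω => Z ω ^ n) μ) {c : ℝ}
    (hc0 : 0 ≤ c) (hc : c < essSup Z μ) :
    Tendsto (fun n : ℕ => c ^ n / ∫ ω, Z ω ^ n ∂μ) atTop (𝓝 0) := by
  obtain ⟨c', hcc', hc'Z⟩ := exists_between hc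
  have hc'0 : 0 < c' := hc0.trans_lt hcc'
  have hp := measureReal_setOf_le_pos_of_lt_essSup hZ0 hc'Z
  have hbound : ∀ n : ℕ,
      c ^ n / ∫ ω, Z ω ^ n ∂μ ≤ (c / c') ^ n / μ.real {ω | c' ≤ Z ω} := fun n => by
    rw [div_pow, div_div]
    exact div_le_div_of_nonneg_left (by positivity) (by positivity)
      (pow_mul_measureReal_le_integral_pow hZ0 (hint n) hc'0.le)
  have hgeom : Tendsto (fun n : ℕ => (c / c') ^ n / μ.real {ω | c' ≤ Z ω}) atTop (𝓝 0) := by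
    simpa using (tendsto_pow_atTop_nhds_zero_of_lt_one (by positivity)
      ((div_lt_one hc'0).2 hcc')).div_const _
  refine squeeze_zero (fun n => div_nonneg (pow_nonneg hc0 n) ?_) hbound hgeom
  exact integral_nonneg_of_ae (by filter_upwards [hZ0] with ω h0 using pow_nonneg h0 n)

end MeasureTheory

/-- For a bounded nonnegative random variable `Z` with essential supremum
`z = essSup Z > 0`, for every `k`, `E[Z^{n+k}] / E[Z^n] → z^k` as `n → ∞`. -/
theorem stmt_1 {Ω : Type*} [MeasurableSpace Ω] (μ : Measure Ω) [IsProbabilityMeasure μ]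
    (Z : Ω → ℝ) (hZm : Measurable Z) (M : ℝ)
    (hZ0 : ∀ᵐ ω ∂μ, 0 ≤ Z ω) (hZM : ∀ᵐ ω ∂μ, Z ω ≤ M)
    (hz : 0 < essSup Z μ) (k : ℕ) :
    Tendsto (fun n : ℕ => (∫ ω, Z ω ^ (n + k) ∂μ) / ∫ ω, Z ω ^ n ∂μ)
      atTop (nhds ((essSup Z μ) ^ k)) := by
  set z := essSup Z μ
  have hint : ∀ n : ℕ, Integrable (fun ω => Z ω ^ n) μ :=
    integrable_pow_of_ae_nonneg_of_ae_le hZm.aestronglyMeasurable hZ0 hZM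
  have hpos : ∀ n : ℕ, 0 < ∫ ω, Z ω ^ n ∂μ := fun n => integral_pow_pos hZ0 (hint n) hz
  refine tendsto_order.2 ⟨fun a ha => ?_, fun a ha => .of_forall fun n => ?_⟩
  · obtain ⟨c, hac, hc0, hcz⟩ : ∃ c, a < c ^ k ∧ 0 < c ∧ c < z :=
      ((((continuous_pow k).tendsto z).mono_left nhdsWithin_le_nhds).eventually
        (lt_mem_nhds ha)).and (Ioo_mem_nhdsLT hz) |>.exists
    have hlim : Tendsto (fun n : ℕ => c ^ k * (1 - c ^ n / ∫ ω, Z ω ^ n ∂μ)) atTop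
        (𝓝 (c ^ k)) := by
      simpa using
        ((tendsto_pow_div_integral_pow_zero hZ0 hint hc0.le hcz).const_sub 1).const_mul (c ^ k)
    filter_upwards [hlim.eventually (lt_mem_nhds hac)] with n hn
    calc a < c ^ k * (1 - c ^ n / ∫ ω, Z ω ^ n ∂μ) := hn
      _ = c ^ k * (∫ ω, Z ω ^ n ∂μ - c ^ n) / ∫ ω, Z ω ^ n ∂μ := by field_simp [(hpos n).ne']
      _ ≤ (∫ ω, Z ω ^ (n + k) ∂μ) / ∫ ω, Z ω ^ n ∂μ :=
        div_le_div_of_nonneg_right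
          (pow_mul_integral_pow_sub_le_integral_pow_add hZ0 (hint n) (hint (n + k)) hc0.le)
          (hpos n).le
  · refine lt_of_le_of_lt ?_ ha
    rw [div_le_iff₀ (hpos n)]
    exact integral_pow_add_le_pow_mul hZ0 (ae_le_essSup ⟨M, hZM⟩) (hint n) (hint (n + k))
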